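/- arXiv:1804.08984 — 2 statements merged into one kernel-verified Lean document; each statement's English description precedes it below -/
import Mathlib

section
/- Let (Ω, 𝓕, P) be a probability space with a filtration (𝓕ₙ)ₙ∈ℕ, let d ≥ 1, and let S ⊆ ℝ^d be a measurable set (the loop-guard set). Let (xₙ)ₙ∈ℕ be an (𝓕ₙ)-adapted process with values in ℝ^d with x₀ = v almost surely for a fixed v ∈ S, and let (Cₙ)ₙ∈ℕ be real-valued random variables such that Cₙ is 𝓕ₙ₊₁-measurable for each n. Let T := inf { n : xₙ ∉ S } and assume T < ∞ almost surely and E[T] < ∞. Let h : ℝ^d → ℝ be affine, i.e. h(w) = aᵀw + b for fixed a ∈ ℝ^d, b ∈ ℝ. Assume: (i) almost surely on the event {xₙ ∉ S} one has xₙ₊₁ = xₙ and Cₙ = 0; (ii) almost surely on the event {xₙ ∈ S} one has E[h(xₙ₊₁) + Cₙ | 𝓕ₙ] ≤ h(xₙ); (iii) there is a constant M ≥ 0 with |h(xₙ₊₁) − h(xₙ)| ≤ M almost surely for all n; (iv) there is a constant R_max ≥ 0 with |Cₙ| ≤ R_max almost surely for all n; (v) there is a constant K with h(x_T) ≥ K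 almost surely. Then the accumulated cost C_∞ := Σₙ₌₀^∞ Cₙ is integrable and E[C_∞] ≤ h(v) − K. -/
/-!
The process `h (xₙ) + ∑_{k<n} C k` has non-increasing expectation: inside `S` by the conditional
decrease of `h`, outside `S` because the process is frozen there. Since the process is frozen
after `T` and its increments are bounded by `M + Rmax`, it is dominated by the integrable
`|h v| + (M + Rmax) T`, and dominated convergence carries the bound to `n → ∞`, where the process
equals `h (x_T) + ∑' n, C n`.
-/

open MeasureTheory Filter
open scoped Topology

theorem integral_le_of_condExp_le_on {Ω : Type*} {m m0 : MeasurableSpace Ω} {μ : Measure Ω}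
    (hm : m ≤ m0) [SigmaFinite (μ.trim hm)] {f φ : Ω → ℝ} {B : Set Ω}
    (hB : MeasurableSet[m] B) (hf : Integrable f μ) (hφ : Integrable φ μ)
    (hle : ∀ᵐ ω ∂μ, ω ∈ B → μ[f|m] ω ≤ φ ω) (heq : ∀ᵐ ω ∂μ, ω ∈ Bᶜ → f ω = φ ω) :
    ∫ ω, f ω ∂μ ≤ ∫ ω, φ ω ∂μ := by
  have hB0 : MeasurableSet B := hm B hB
  rw [← integral_add_compl hB0 hf, ← integral_add_compl hB0 hφ, ← setIntegral_condExp hm hf hB,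
    setIntegral_congr_ae hB0.compl heq]
  exact add_le_add_left
    (setIntegral_mono_on_ae integrable_condExp.integrableOn hφ.integrableOn hB0 hle) _

theorem abs_sub_le_mul_of_abs_succ_sub_le {u : ℕ → ℝ} {L : ℝ} (hinc : ∀ k, |u (k + 1) - u k| ≤ L)
    (n : ℕ) : |u n - u 0| ≤ n * L := by
  have hdist := dist_le_range_sum_of_dist_le (f := u) n (d := fun _ => L) fun {k} _ => by
    rw [dist_comm, Real.dist_eq]; exact hinc k
  simpa [Real.dist_eq, abs_sub_comm] using hdist

theorem abs_le_of_abs_succ_sub_le_of_stopped {u : ℕ → ℝ} {c L U : ℝ} {N : ℕ} (h0 : u 0 = c)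
    (hinc : ∀ k, |u (k + 1) - u k| ≤ L) (hstop : ∀ n, N ≤ n → u n = U) (n : ℕ) :
    |u n| ≤ |c| + L * N := by
  have hL : 0 ≤ L := (abs_nonneg _).trans (hinc 0)
  have hstopped : u n = u (min N n) := by
    rcases le_total N n with hNn | hnN
    · rw [min_eq_left hNn, hstop n hNn, hstop N le_rfl]
    · rw [min_eq_right hnN]
  have hmin : (min N n : ℝ) * L ≤ N * L := by gcongr; exact_mod_cast min_le_left N n
  have hdrift := abs_sub_le_mul_of_abs_succ_sub_le hinc (min N n)
  rw [h0] at hdrift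
  calc |u n| ≤ |c| + |u n - c| := by simpa using abs_add_le c (u n - c)
    _ ≤ |c| + L * N := by rw [hstopped]; push_cast at hdrift; linarith

section BoundedIncrements

variable {Ω : Type*} {m0 : MeasurableSpace Ω} {μ : Measure Ω} [IsFiniteMeasure μ]
  {u : ℕ → Ω → ℝ} {c L : ℝ}

theorem integrable_of_abs_succ_sub_le (hu : ∀ n, AEStronglyMeasurable (u n) μ)
    (h0 : ∀ᵐ ω ∂μ, u 0 ω = c) (hinc : ∀ n, ∀ᵐ ω ∂μ, |u (n + 1) ω - u n ω| ≤ L) (n : ℕ) :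
    Integrable (u n) μ := by
  refine .of_bound (hu n) (|c| + n * L) ?_
  filter_upwards [h0, ae_all_iff.2 hinc] with ω hω0 hωinc
  have hdrift := abs_sub_le_mul_of_abs_succ_sub_le (u := fun k => u k ω) hωinc n
  rw [hω0] at hdrift
  rw [Real.norm_eq_abs]
  linarith [abs_sub_abs_le_abs_sub (u n ω) c]

theorem tendsto_integral_of_abs_succ_sub_le_of_stopped {U : Ω → ℝ} {τ : Ω → ℕ}
    (hu : ∀ n, AEStronglyMeasurable (u n) μ) (hτ : Integrable (fun ω => (τ ω : ℝ)) μ)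
    (h0 : ∀ᵐ ω ∂μ, u 0 ω = c) (hinc : ∀ n, ∀ᵐ ω ∂μ, |u (n + 1) ω - u n ω| ≤ L)
    (hstop : ∀ᵐ ω ∂μ, ∀ n, τ ω ≤ n → u n ω = U ω) :
    Integrable U μ ∧ Tendsto (fun n => ∫ ω, u n ω ∂μ) atTop (𝓝 (∫ ω, U ω ∂μ)) := by
  have hbound_int : Integrable (fun ω => |c| + L * τ ω) μ :=
    (integrable_const _).add (hτ.const_mul L)
  have hbound : ∀ᵐ ω ∂μ, ∀ n, ‖u n ω‖ ≤ |c| + L * τ ω := by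
    filter_upwards [h0, ae_all_iff.2 hinc, hstop] with ω hω0 hωinc hωstop n
    exact abs_le_of_abs_succ_sub_le_of_stopped hω0 hωinc hωstop n
  have hlim : ∀ᵐ ω ∂μ, Tendsto (fun n => u n ω) atTop (𝓝 (U ω)) := by
    filter_upwards [hstop] with ω hω
    exact tendsto_atTop_of_eventually_const fun n hn => hω n hn
  refine ⟨hbound_int.mono' (aestronglyMeasurable_of_tendsto_ae atTop hu hlim) ?_,
    tendsto_integral_of_dominated_convergence _ hu hbound_int (fun n => ?_) hlim⟩
  · filter_upwards [hbound, hstop] with ω hωb hωstop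
    rw [← hωstop (τ ω) le_rfl]
    exact hωb _
  · filter_upwards [hbound] with ω hω using hω n

end BoundedIncrements

theorem frozen_of_sInf_le {α : Type*} {y : ℕ → α} {c : ℕ → ℝ} {S : Set α}
    (hfreeze : ∀ n, y n ∉ S → y (n + 1) = y n ∧ c n = 0) (hexit : ∃ n, y n ∉ S) :
    ∀ n, sInf {n | y n ∉ S} ≤ n → y n = y (sInf {n | y n ∉ S}) ∧ c n = 0 := by
  have hyexit : ∀ n, sInf {n | y n ∉ S} ≤ n → y n = y (sInf {n | y n ∉ S}) := by
    intro n hn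
    induction n, hn using Nat.le_induction with
    | base => rfl
    | succ n hn ih =>
      rw [(hfreeze n (ih ▸ Nat.sInf_mem hexit)).1, ih]
  exact fun n hn => ⟨hyexit n hn, (hfreeze n (hyexit n hn ▸ Nat.sInf_mem hexit)).2⟩

theorem integral_tsum_add_le_of_stopped {Ω : Type*} {m0 : MeasurableSpace Ω} {μ : Measure Ω}
    [IsProbabilityMeasure μ] {φ C : ℕ → Ω → ℝ} {Φ : Ω → ℝ} {τ : Ω → ℕ} {c M R : ℝ}
    (hφ : ∀ n, AEStronglyMeasurable (φ n) μ) (hC : ∀ n, AEStronglyMeasurable (C n) μ)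
    (hτ : Integrable (fun ω => (τ ω : ℝ)) μ) (hφ0 : ∀ᵐ ω ∂μ, φ 0 ω = c)
    (hφinc : ∀ n, ∀ᵐ ω ∂μ, |φ (n + 1) ω - φ n ω| ≤ M) (hCbd : ∀ n, ∀ᵐ ω ∂μ, |C n ω| ≤ R)
    (hstop : ∀ᵐ ω ∂μ, ∀ n, τ ω ≤ n → φ n ω = Φ ω ∧ C n ω = 0)
    (hdecr : ∀ n, ∫ ω, φ (n + 1) ω ∂μ + ∫ ω, C n ω ∂μ ≤ ∫ ω, φ n ω ∂μ) :
    Integrable Φ μ ∧ Integrable (fun ω => ∑' n, C n ω) μ ∧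
      ∫ ω, (∑' n, C n ω) ∂μ + ∫ ω, Φ ω ∂μ ≤ c := by
  set s : ℕ → Ω → ℝ := fun n ω => ∑ k ∈ Finset.range n, C k ω
  have hs : ∀ n, AEStronglyMeasurable (s n) μ := fun n =>
    Finset.aestronglyMeasurable_fun_sum _ fun k _ => hC k
  have hsinc : ∀ n, ∀ᵐ ω ∂μ, |s (n + 1) ω - s n ω| ≤ R := fun n => by
    simpa [s, Finset.sum_range_succ] using hCbd n
  have hsstop : ∀ᵐ ω ∂μ, ∀ n, τ ω ≤ n → s n ω = ∑' k, C k ω := by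
    filter_upwards [hstop] with ω hω n hn
    refine (tsum_eq_sum fun k hk => (hω k ?_).2).symm
    simp only [Finset.mem_range, not_lt] at hk
    omega
  obtain ⟨hΦ, hφlim⟩ := tendsto_integral_of_abs_succ_sub_le_of_stopped hφ hτ hφ0 hφinc
    (hstop.mono fun ω hω n hn => (hω n hn).1)
  obtain ⟨htsum, hslim⟩ := tendsto_integral_of_abs_succ_sub_le_of_stopped hs hτ
    (ae_of_all _ fun ω => Finset.sum_range_zero _) hsinc hsstop
  have hCint : ∀ n, Integrable (C n) μ := fun n =>
    .of_bound (hC n) R (by simpa using hCbd n)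
  have hs_eq : ∀ n, ∫ ω, s n ω ∂μ = ∑ k ∈ Finset.range n, ∫ ω, C k ω ∂μ := fun n =>
    integral_finsetSum _ fun k _ => hCint k
  have hanti : Antitone fun n => ∫ ω, φ n ω ∂μ + ∫ ω, s n ω ∂μ := by
    refine antitone_nat_of_succ_le fun n => ?_
    rw [hs_eq, hs_eq, Finset.sum_range_succ]
    linarith [hdecr n]
  refine ⟨hΦ, htsum, le_of_tendsto' ((hslim.add hφlim).congr fun n => add_comm _ _) fun n => ?_⟩
  calc ∫ ω, φ n ω ∂μ + ∫ ω, s n ω ∂μ ≤ ∫ ω, φ 0 ω ∂μ + ∫ ω, s 0 ω ∂μ := hanti (Nat.zero_le n)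
    _ = c := by simp [s, integral_congr_ae hφ0]

theorem lupf_upper_bound_general
    {Ω : Type*} {m0 : MeasurableSpace Ω} (P : Measure Ω) [IsProbabilityMeasure P]
    (ℱ : Filtration ℕ m0)
    (d : ℕ)
    (S : Set (Fin d → ℝ)) (hS : MeasurableSet S)
    (x : ℕ → Ω → (Fin d → ℝ)) (hx : Adapted ℱ x)
    (v : Fin d → ℝ) (hx0 : ∀ᵐ ω ∂P, x 0 ω = v)
    (C : ℕ → Ω → ℝ) (hCmeas : ∀ n, StronglyMeasurable[ℱ (n + 1)] (C n))
    (T : Ω → ℕ) (hT : ∀ ω, T ω = sInf {n | x n ω ∉ S})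
    (hTfin : ∀ᵐ ω ∂P, ∃ n, x n ω ∉ S)
    (hTint : Integrable (fun ω => (T ω : ℝ)) P)
    (h : (Fin d → ℝ) → ℝ) (a : Fin d → ℝ) (b : ℝ)
    (haff : ∀ w, h w = (∑ i, a i * w i) + b)
    (hfreeze : ∀ n, ∀ᵐ ω ∂P, x n ω ∉ S → x (n + 1) ω = x n ω ∧ C n ω = 0)
    (hdecr : ∀ n, ∀ᵐ ω ∂P, x n ω ∈ S →
      (P[fun ω' => h (x (n + 1) ω') + C n ω' | ℱ n]) ω ≤ h (x n ω))
    (M : ℝ)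
    (hbd : ∀ n, ∀ᵐ ω ∂P, |h (x (n + 1) ω) - h (x n ω)| ≤ M)
    (Rmax : ℝ)
    (hCbd : ∀ n, ∀ᵐ ω ∂P, |C n ω| ≤ Rmax)
    (K : ℝ) (hK : ∀ᵐ ω ∂P, K ≤ h (x (T ω) ω)) :
    Integrable (fun ω => ∑' n, C n ω) P ∧
      ∫ ω, (∑' n, C n ω) ∂P ≤ h v - K := by
  have hcont : Continuous h := by
    rw [funext haff]
    fun_prop
  have hhx : ∀ n, AEStronglyMeasurable (fun ω => h (x n ω)) P := fun n =>
    (hcont.measurable.comp ((hx n).mono (ℱ.le n) le_rfl)).aestronglyMeasurable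
  have hC : ∀ n, AEStronglyMeasurable (C n) P := fun n =>
    ((hCmeas n).mono (ℱ.le (n + 1))).aestronglyMeasurable
  have hhx0 : ∀ᵐ ω ∂P, h (x 0 ω) = h v := hx0.mono fun ω hω => by rw [hω]
  have hhx_int := integrable_of_abs_succ_sub_le hhx hhx0 hbd
  have hC_int : ∀ n, Integrable (C n) P := fun n =>
    .of_bound (hC n) Rmax (by simpa using hCbd n)
  have hexpect : ∀ n, ∫ ω, h (x (n + 1) ω) ∂P + ∫ ω, C n ω ∂P ≤ ∫ ω, h (x n ω) ∂P := fun n => by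
    rw [← integral_add (hhx_int (n + 1)) (hC_int n)]
    refine integral_le_of_condExp_le_on (ℱ.le n) (hx n hS) ((hhx_int (n + 1)).add (hC_int n))
      (hhx_int n) (hdecr n) ?_
    filter_upwards [hfreeze n] with ω hω hωS
    simp [hω hωS]
  have hstop : ∀ᵐ ω ∂P, ∀ n, T ω ≤ n → h (x n ω) = h (x (T ω) ω) ∧ C n ω = 0 := by
    filter_upwards [hTfin, ae_all_iff.2 hfreeze] with ω hωexit hωfreeze n hn
    rw [hT] at hn ⊢
    obtain ⟨hxn, hCn⟩ := frozen_of_sInf_le hωfreeze hωexit n hn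
    exact ⟨by rw [hxn], hCn⟩
  obtain ⟨hhxT, htsum, hcost⟩ :=
    integral_tsum_add_le_of_stopped hhx hC hTint hhx0 hbd hCbd hstop hexpect
  have hK_le : K ≤ ∫ ω, h (x (T ω) ω) ∂P := by
    simpa using integral_mono_ae (integrable_const K) hhxT hK
  exact ⟨htsum, by linarith⟩

/-- **Upper bounds via Linear Upper Potential Functions (LUPFs).**
If `h` is an affine potential function that conditionally decreases (plus the step cost)
inside the loop-guard set `S`, has bounded differences along the process, and is bounded
below by `K` at the termination time `T` (which has finite expectation), then the
accumulated cost `C_∞ = ∑ₙ Cₙ` is integrable and `E[C_∞] ≤ h(v) − K`. -/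
theorem lupf_upper_bound
    {Ω : Type*} {m0 : MeasurableSpace Ω} (P : Measure Ω) [IsProbabilityMeasure P]
    (ℱ : Filtration ℕ m0)
    (d : ℕ) (hd : 1 ≤ d)
    (S : Set (Fin d → ℝ)) (hS : MeasurableSet S)
    (x : ℕ → Ω → (Fin d → ℝ)) (hx : Adapted ℱ x)
    (v : Fin d → ℝ) (hv : v ∈ S) (hx0 : ∀ᵐ ω ∂P, x 0 ω = v)
    (C : ℕ → Ω → ℝ) (hCmeas : ∀ n, StronglyMeasurable[ℱ (n + 1)] (C n))
    (T : Ω → ℕ) (hT : ∀ ω, T ω = sInf {n | x n ω ∉ S})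
    (hTfin : ∀ᵐ ω ∂P, ∃ n, x n ω ∉ S)
    (hTint : Integrable (fun ω => (T ω : ℝ)) P)
    (h : (Fin d → ℝ) → ℝ) (a : Fin d → ℝ) (b : ℝ)
    (haff : ∀ w, h w = (∑ i, a i * w i) + b)
    (hfreeze : ∀ n, ∀ᵐ ω ∂P, x n ω ∉ S → x (n + 1) ω = x n ω ∧ C n ω = 0)
    (hdecr : ∀ n, ∀ᵐ ω ∂P, x n ω ∈ S →
      (P[fun ω' => h (x (n + 1) ω') + C n ω' | ℱ n]) ω ≤ h (x n ω))
    (M : ℝ) (hM : 0 ≤ M)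
    (hbd : ∀ n, ∀ᵐ ω ∂P, |h (x (n + 1) ω) - h (x n ω)| ≤ M)
    (Rmax : ℝ) (hR : 0 ≤ Rmax)
    (hCbd : ∀ n, ∀ᵐ ω ∂P, |C n ω| ≤ Rmax)
    (K : ℝ) (hK : ∀ᵐ ω ∂P, K ≤ h (x (T ω) ω)) :
    Integrable (fun ω => ∑' n, C n ω) P ∧
      ∫ ω, (∑' n, C n ω) ∂P ≤ h v - K :=
  lupf_upper_bound_general P ℱ d S hS x hx v hx0 C hCmeas T hT hTfin hTint h a b haff hfreeze hdecr
    M hbd Rmax hCbd K hK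
end

section
/- Let (Ω, 𝓕, P) be a probability space with a filtration (𝓕ₙ)ₙ∈ℕ, let d ≥ 1, and let S ⊆ ℝ^d be a measurable set. Let (xₙ)ₙ∈ℕ be an (𝓕ₙ)-adapted ℝ^d-valued process and (Cₙ)ₙ∈ℕ real-valued random variables with Cₙ being 𝓕ₙ₊₁-measurable and integrable. Let h : ℝ^d → ℝ be affine. Assume: (i) almost surely on {xₙ ∉ S}, xₙ₊₁ = xₙ and Cₙ = 0; (ii) almost surely on {xₙ ∈ S}, E[h(xₙ₊₁) + Cₙ | 𝓕ₙ] ≤ h(xₙ); (iii) all h(xₙ) are integrable. Define Yₙ := h(xₙ) + Σ_{m=0}^{n−1} C_m. Then (Yₙ)ₙ∈ℕ is a supermartingale with respect to (𝓕ₙ), i.e. each Yₙ is integrable, 𝓕ₙ-measurable, and E[Yₙ₊₁ | 𝓕ₙ] ≤ Yₙ almost surely. -/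
open MeasureTheory Filter

/-! Outside the loop guard the process is frozen at zero cost, so there `h(xₙ₊₁) + Cₙ = h(xₙ)`,
and since `{xₙ ∈ S}` is `𝓕ₙ`-measurable, conditional expectation is local on it: the step
`E[h(xₙ₊₁) + Cₙ | 𝓕ₙ] ≤ h(xₙ)` then holds everywhere. Adding the `𝓕ₙ`-measurable partial cost
`∑_{m<n} C_m` to both sides gives `E[Yₙ₊₁ | 𝓕ₙ] ≤ Yₙ`. -/

section CondExp

variable {Ω : Type*} {m m0 : MeasurableSpace Ω} {μ : Measure Ω} {f g k : Ω → ℝ} {s : Set Ω}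

theorem condExp_eq_on_of_eq_on (hm : m ≤ m0) [SigmaFinite (μ.trim hm)]
    (hf : Integrable f μ) (hg_meas : StronglyMeasurable[m] g) (hg : Integrable g μ)
    (hs : MeasurableSet[m] s) (hfg : ∀ᵐ ω ∂μ, ω ∈ s → f ω = g ω) :
    ∀ᵐ ω ∂μ, ω ∈ s → μ[f | m] ω = g ω := by
  have hsub : μ[f - g | m] =ᵐ[μ] μ[f | m] - g := by
    simpa only [condExp_of_stronglyMeasurable hm hg_meas hg] using condExp_sub hf hg m
  have hzero : μ[f - g | m] =ᵐ[μ.restrict s] 0 := by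
    refine condExp_ae_eq_restrict_zero hs ?_
    rw [EventuallyEq, ae_restrict_iff' (hm _ hs)]
    filter_upwards [hfg] with ω hω hωs
    simp [hω hωs]
  rw [EventuallyEq, ae_restrict_iff' (hm _ hs)] at hzero
  filter_upwards [hzero, hsub] with ω hω hω_sub hωs
  simpa [hω_sub, sub_eq_zero] using hω hωs

theorem condExp_le_of_le_on_of_eq_on_compl (hm : m ≤ m0) [SigmaFinite (μ.trim hm)]
    (hf : Integrable f μ) (hg_meas : StronglyMeasurable[m] g) (hg : Integrable g μ)
    (hs : MeasurableSet[m] s) (h_on : ∀ᵐ ω ∂μ, ω ∈ s → μ[f | m] ω ≤ g ω)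
    (h_off : ∀ᵐ ω ∂μ, ω ∉ s → f ω = g ω) :
    μ[f | m] ≤ᵐ[μ] g := by
  filter_upwards [h_on, condExp_eq_on_of_eq_on hm hf hg_meas hg hs.compl h_off]
    with ω hω_on hω_off
  by_cases hωs : ω ∈ s
  exacts [hω_on hωs, (hω_off hωs).le]

theorem condExp_add_le_add_of_condExp_le (hm : m ≤ m0) [SigmaFinite (μ.trim hm)]
    (hf : Integrable f μ) (hk_meas : StronglyMeasurable[m] k) (hk : Integrable k μ)
    (hfg : μ[f | m] ≤ᵐ[μ] g) :
    μ[f + k | m] ≤ᵐ[μ] g + k := by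
  filter_upwards [condExp_add hf hk m, hfg] with ω hω_add hω_le
  simpa [hω_add, condExp_of_stronglyMeasurable hm hk_meas hk] using hω_le

end CondExp

theorem potential_plus_cost_supermartingale_general
    {Ω : Type*} {m0 : MeasurableSpace Ω} (P : Measure Ω) [IsProbabilityMeasure P]
    (ℱ : Filtration ℕ m0)
    (d : ℕ)
    (S : Set (Fin d → ℝ)) (hS : MeasurableSet S)
    (x : ℕ → Ω → (Fin d → ℝ)) (hx : Adapted ℱ x)
    (C : ℕ → Ω → ℝ) (hCmeas : ∀ n, StronglyMeasurable[ℱ (n + 1)] (C n))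
    (hCint : ∀ n, Integrable (C n) P)
    (h : (Fin d → ℝ) → ℝ) (a : Fin d → ℝ) (b : ℝ)
    (haff : ∀ w, h w = (∑ i, a i * w i) + b)
    (hfreeze : ∀ n, ∀ᵐ ω ∂P, x n ω ∉ S → x (n + 1) ω = x n ω ∧ C n ω = 0)
    (hdecr : ∀ n, ∀ᵐ ω ∂P, x n ω ∈ S →
      (P[fun ω' => h (x (n + 1) ω') + C n ω' | ℱ n]) ω ≤ h (x n ω))
    (hhint : ∀ n, Integrable (fun ω => h (x n ω)) P)
    (Y : ℕ → Ω → ℝ)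
    (hY : ∀ n ω, Y n ω = h (x n ω) + ∑ m ∈ Finset.range n, C m ω) :
    (∀ n, Integrable (Y n) P) ∧ (∀ n, StronglyMeasurable[ℱ n] (Y n)) ∧
      (∀ n, ∀ᵐ ω ∂P, (P[Y (n + 1) | ℱ n]) ω ≤ Y n ω) := by
  obtain rfl : Y = fun n ω => h (x n ω) + ∑ m ∈ Finset.range n, C m ω := funext₂ hY
  have hh : Measurable h := by rw [funext haff]; fun_prop
  have hhx (n : ℕ) : StronglyMeasurable[ℱ n] fun ω => h (x n ω) :=
    (hh.comp (hx n)).stronglyMeasurable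
  have hcost (n : ℕ) : StronglyMeasurable[ℱ n] fun ω => ∑ m ∈ Finset.range n, C m ω :=
    Finset.stronglyMeasurable_fun_sum _ fun m hm =>
      (hCmeas m).mono (ℱ.mono (Finset.mem_range.mp hm))
  have hcost_int (n : ℕ) : Integrable (fun ω => ∑ m ∈ Finset.range n, C m ω) P :=
    integrable_finsetSum _ fun m _ => hCint m
  refine ⟨fun n => (hhint n).add (hcost_int n), fun n => (hhx n).add (hcost n), fun n => ?_⟩
  have hstep : P[fun ω => h (x (n + 1) ω) + C n ω | ℱ n] ≤ᵐ[P] fun ω => h (x n ω) := by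
    refine condExp_le_of_le_on_of_eq_on_compl (ℱ.le n) ((hhint (n + 1)).add (hCint n)) (hhx n)
      (hhint n) (hx n hS) (hdecr n) ?_
    filter_upwards [hfreeze n] with ω hω hωS
    simp [(hω hωS).1, (hω hωS).2]
  have hsucc : (fun ω => h (x (n + 1) ω) + ∑ m ∈ Finset.range (n + 1), C m ω) =
      (fun ω => h (x (n + 1) ω) + C n ω) + fun ω => ∑ m ∈ Finset.range n, C m ω := by
    funext ω
    rw [Finset.sum_range_succ, Pi.add_apply]
    ring
  beta_reduce
  rw [hsucc]
  exact condExp_add_le_add_of_condExp_le (ℱ.le n) ((hhint (n + 1)).add (hCint n)) (hcost n)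
    (hcost_int n) hstep

/-- **Supermartingale property of potential plus accumulated cost.**
If the affine potential `h` conditionally decreases (plus the step cost `Cₙ`) inside the
loop-guard set `S`, and the process freezes with zero cost outside `S`, then
`Yₙ = h(xₙ) + ∑_{m<n} C_m` is a supermartingale: each `Yₙ` is integrable,
`𝓕ₙ`-measurable, and `E[Yₙ₊₁ | 𝓕ₙ] ≤ Yₙ` almost surely. -/
theorem potential_plus_cost_supermartingale
    {Ω : Type*} {m0 : MeasurableSpace Ω} (P : Measure Ω) [IsProbabilityMeasure P]
    (ℱ : Filtration ℕ m0)
    (d : ℕ) (hd : 1 ≤ d)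
    (S : Set (Fin d → ℝ)) (hS : MeasurableSet S)
    (x : ℕ → Ω → (Fin d → ℝ)) (hx : Adapted ℱ x)
    (C : ℕ → Ω → ℝ) (hCmeas : ∀ n, StronglyMeasurable[ℱ (n + 1)] (C n))
    (hCint : ∀ n, Integrable (C n) P)
    (h : (Fin d → ℝ) → ℝ) (a : Fin d → ℝ) (b : ℝ)
    (haff : ∀ w, h w = (∑ i, a i * w i) + b)
    (hfreeze : ∀ n, ∀ᵐ ω ∂P, x n ω ∉ S → x (n + 1) ω = x n ω ∧ C n ω = 0)
    (hdecr : ∀ n, ∀ᵐ ω ∂P, x n ω ∈ S →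
      (P[fun ω' => h (x (n + 1) ω') + C n ω' | ℱ n]) ω ≤ h (x n ω))
    (hhint : ∀ n, Integrable (fun ω => h (x n ω)) P)
    (Y : ℕ → Ω → ℝ)
    (hY : ∀ n ω, Y n ω = h (x n ω) + ∑ m ∈ Finset.range n, C m ω) :
    (∀ n, Integrable (Y n) P) ∧ (∀ n, StronglyMeasurable[ℱ n] (Y n)) ∧
      (∀ n, ∀ᵐ ω ∂P, (P[Y (n + 1) | ℱ n]) ω ≤ Y n ω) :=
  potential_plus_cost_supermartingale_general P ℱ d S hS x hx C hCmeas hCint h a b haff hfreeze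
    hdecr hhint Y hY
end
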